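/- arXiv:1205.2194 — 2 statements merged into one kernel-verified Lean document; each statement's English description precedes it below -/
import Mathlib

section
/- If P and Q are orthogonal projections on a Hilbert space H with ‖P + Q‖ ≤ 1, then the ranges of P and Q are orthogonal (equivalently, PQ = 0). -/
/-!
For an orthogonal projection `p` one has `re ⟪p x, x⟫ = ‖p x‖ ^ 2`, so if `p + q` is a
contraction then `‖p x‖ ^ 2 + ‖q x‖ ^ 2 ≤ ‖x‖ ^ 2`. At a vector `x = p x` of the range of `p`
this forces `q x = 0`, i.e. `q * p = 0`; exchanging the roles of `p` and `q` gives `p * q = 0`.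
-/

open scoped InnerProductSpace

section

variable {𝕜 E : Type*} [RCLike 𝕜] [NormedAddCommGroup E] [InnerProductSpace 𝕜 E]

theorem LinearMap.IsSymmetricProjection.re_inner_apply_self {T : E →ₗ[𝕜] E}
    (hT : T.IsSymmetricProjection) (x : E) : RCLike.re ⟪T x, x⟫_𝕜 = ‖T x‖ ^ 2 := by
  conv_lhs => rw [← hT.isIdempotentElem]
  rw [Module.End.mul_apply, hT.isSymmetric]
  exact inner_self_eq_norm_sq _

namespace ContinuousLinearMap

theorem re_inner_apply_self_le_of_norm_le_one {T : E →L[𝕜] E} (hT : ‖T‖ ≤ 1) (x : E) :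
    RCLike.re ⟪T x, x⟫_𝕜 ≤ ‖x‖ ^ 2 :=
  calc RCLike.re ⟪T x, x⟫_𝕜 ≤ ‖T x‖ * ‖x‖ := re_inner_le_norm _ _
    _ ≤ ‖x‖ * ‖x‖ := by gcongr; exact T.le_of_opNorm_le hT x |>.trans_eq (one_mul _)
    _ = ‖x‖ ^ 2 := (sq _).symm

variable [CompleteSpace E] {p q : E →L[𝕜] E}

theorem IsStarProjection.norm_sq_add_norm_sq_le_of_norm_add_le_one (hp : IsStarProjection p)
    (hq : IsStarProjection q) (hpq : ‖p + q‖ ≤ 1) (x : E) :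
    ‖p x‖ ^ 2 + ‖q x‖ ^ 2 ≤ ‖x‖ ^ 2 := by
  have hpx : RCLike.re ⟪p x, x⟫_𝕜 = ‖p x‖ ^ 2 :=
    (IsStarProjection.isSymmetricProjection hp).re_inner_apply_self x
  have hqx : RCLike.re ⟪q x, x⟫_𝕜 = ‖q x‖ ^ 2 :=
    (IsStarProjection.isSymmetricProjection hq).re_inner_apply_self x
  rw [← hpx, ← hqx, ← map_add, ← inner_add_left]
  exact re_inner_apply_self_le_of_norm_le_one hpq x

theorem IsStarProjection.mul_eq_zero_of_norm_add_le_one (hp : IsStarProjection p)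
    (hq : IsStarProjection q) (hpq : ‖p + q‖ ≤ 1) : q * p = 0 := by
  ext x
  have h := norm_sq_add_norm_sq_le_of_norm_add_le_one hp hq hpq (p x)
  rw [← mul_apply_eq_comp, hp.isIdempotentElem.eq] at h
  simpa using h

end ContinuousLinearMap

end

/-- If `P` and `Q` are orthogonal projections on a Hilbert space with `‖P + Q‖ ≤ 1`,
then the ranges of `P` and `Q` are orthogonal; equivalently `P ∘ Q = 0`. -/
theorem stmt0 {H : Type*} [NormedAddCommGroup H] [InnerProductSpace ℂ H] [CompleteSpace H]
    (P Q : H →L[ℂ] H)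
    (hP : IsSelfAdjoint P) (hP2 : P ∘L P = P)
    (hQ : IsSelfAdjoint Q) (hQ2 : Q ∘L Q = Q)
    (hnorm : ‖P + Q‖ ≤ 1) :
    (∀ x y : H, ⟪P x, Q y⟫_ℂ = 0) ∧ P ∘L Q = 0 := by
  have hPQ : P * Q = 0 :=
    ContinuousLinearMap.IsStarProjection.mul_eq_zero_of_norm_add_le_one ⟨hQ2, hQ⟩ ⟨hP2, hP⟩
      (by rwa [add_comm])
  refine ⟨fun x y => ?_, hPQ⟩
  rw [← hP.adjoint_eq, ContinuousLinearMap.adjoint_inner_left, ← ContinuousLinearMap.comp_apply,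
    ← ContinuousLinearMap.mul_def, hPQ, zero_apply, inner_zero_right]
end

section
/- Let E be a finite directed graph with vertex matrix A(v,w) = |vE¹w| (number of edges with range v and source w), let β > log ρ(A), and for v ∈ V set y_v = ∑_{μ ∈ E* with s(μ)=v} exp(-β |μ|), the sum over all finite paths with source v. Then this series converges and y_v = ∑_{w} ((I - exp(-β)A)⁻¹)(w,v) ≥ 1. -/
/-! The hypothesis puts the spectral radius of `B = exp(-β) • A` below `1`, so by Gelfand's
formula `‖Bⁿ‖` eventually decays geometrically and the Neumann series `∑ Bⁿ` converges to
`(1 - B)⁻¹`. Reading off column `v` and summing over the rows gives the series for `y_v`. Its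
terms are nonnegative, since `Aⁿ` counts paths, so `y_v` is at least its `n = 0` term, `1`. -/

open Filter Topology

theorem summable_pow_of_spectralRadius_lt_one {A : Type*} [NormedRing A] [NormedAlgebra ℂ A]
    [CompleteSpace A] {a : A} (ha : spectralRadius ℂ a < 1) : Summable (a ^ ·) := by
  obtain ⟨r, hr, hr1⟩ := ENNReal.lt_iff_exists_nnreal_btwn.mp ha
  have hroot : ∀ᶠ n : ℕ in atTop, ‖a ^ n‖ ^ (1 / n : ℝ) < r := by
    filter_upwards [(spectrum.pow_norm_pow_one_div_tendsto_nhds_spectralRadius a).eventually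
      (gt_mem_nhds hr)] with n hn
    exact (ENNReal.ofReal_lt_coe_iff (by positivity)).mp hn
  refine .of_norm_bounded_eventually_nat (summable_geometric_of_lt_one r.coe_nonneg
    (by exact_mod_cast hr1)) ?_
  filter_upwards [hroot, eventually_ne_atTop 0] with n hn hn0
  calc ‖a ^ n‖ = (‖a ^ n‖ ^ (n⁻¹ : ℝ)) ^ n :=
        (Real.rpow_inv_natCast_pow (norm_nonneg _) hn0).symm
    _ ≤ r ^ n := pow_le_pow_left₀ (by positivity) (by simpa using hn.le) n

theorem one_sub_mul_tsum_pow_eq_one {R : Type*} [Ring R] [TopologicalSpace R]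
    [IsTopologicalRing R] [T2Space R] {x : R} (hx : Summable (x ^ ·)) :
    (1 - x) * ∑' n, x ^ n = 1 := by
  have hshift : ∑' n, x ^ n = 1 + x * ∑' n, x ^ n := by
    rw [← hx.tsum_mul_left]
    simpa only [pow_zero, pow_succ'] using hx.tsum_eq_zero_add
  rw [sub_mul, one_mul, ← sub_eq_iff_eq_add'.mpr hshift, sub_sub_cancel]

namespace Matrix

variable {n : Type*} [Fintype n] [DecidableEq n]

theorem hasSum_pow_inv_one_sub {R : Type*} [CommRing R] [TopologicalSpace R]
    [IsTopologicalRing R] [T2Space R] {B : Matrix n n R} (hB : Summable (B ^ ·)) :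
    HasSum (B ^ ·) (1 - B)⁻¹ := by
  rw [inv_eq_right_inv (one_sub_mul_tsum_pow_eq_one hB)]
  exact hB.hasSum

theorem summable_pow_of_norm_spectrum_lt_one (M : Matrix n n ℂ)
    (hM : ∀ z ∈ spectrum ℂ M, ‖z‖ < 1) : Summable (M ^ ·) := by
  rcases isEmpty_or_nonempty n with hn | hn
  · exact (Subsingleton.elim _ 0 : (M ^ · : ℕ → Matrix n n ℂ) = 0) ▸ summable_zero
  -- Summability is topological, so any submultiplicative norm on matrices will do.
  let := Matrix.linftyOpNormedRing (n := n) (α := ℂ)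
  let := Matrix.linftyOpNormedAlgebra (n := n) (R := ℂ) (α := ℂ)
  exact summable_pow_of_spectralRadius_lt_one
    (spectrum.spectralRadius_lt_of_forall_lt M fun z hz => by exact_mod_cast hM z hz)

theorem summable_pow_of_summable_pow_map_ofReal {B : Matrix n n ℝ}
    (hB : Summable fun k : ℕ => B.map Complex.ofReal ^ k) : Summable (B ^ ·) := by
  have := hB.map (Complex.reAddGroupHom.mapMatrix : Matrix n n ℂ →+ Matrix n n ℝ)
    (continuous_id.matrix_map Complex.continuous_re)
  have hpow (k : ℕ) : B.map Complex.ofReal ^ k = (B ^ k).map Complex.ofReal :=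
    (map_pow Complex.ofRealHom.mapMatrix B k).symm
  convert this using 2 with k
  ext i j
  simp [hpow]

end Matrix

theorem norm_lt_one_of_mem_spectrum_smul {A : Type*} [Ring A] [Algebra ℂ A] {a : A} {c : ℝ}
    (hc : 0 < c) (ha : ∀ μ ∈ spectrum ℂ a, c * ‖μ‖ < 1) :
    ∀ z ∈ spectrum ℂ ((c : ℂ) • a), ‖z‖ < 1 := by
  let u : ℂˣ := Units.mk0 c (by exact_mod_cast hc.ne')
  intro z hz
  rw [show (c : ℂ) • a = u • a from rfl, spectrum.unit_smul_eq_smul] at hz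
  obtain ⟨μ, hμ, rfl⟩ := hz
  simpa [u, Units.smul_def, norm_smul, abs_of_pos hc] using ha μ hμ

theorem stmt10_general {V E : Type*} [Fintype V] [DecidableEq V] [Fintype E]
    (r s : E → V) (A : Matrix V V ℝ)
    (hA : ∀ v w : V, A v w = (Fintype.card {e : E // r e = v ∧ s e = w} : ℝ))
    (β : ℝ)
    (hβ : ∀ μ ∈ spectrum ℂ (A.map (Complex.ofReal : ℝ → ℂ)),
      Real.exp (-β) * ‖μ‖ < 1) :
    ∀ v : V,
      HasSum (fun n : ℕ => ∑ w : V, Real.exp (-β * n) * (A ^ n) w v)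
        (∑ w : V, (1 - Real.exp (-β) • A)⁻¹ w v) ∧
      1 ≤ ∑ w : V, (1 - Real.exp (-β) • A)⁻¹ w v := by
  intro v
  have hspec : ∀ z ∈ spectrum ℂ ((Real.exp (-β) • A).map Complex.ofReal), ‖z‖ < 1 := by
    have hmap : (Real.exp (-β) • A).map Complex.ofReal =
        (Real.exp (-β) : ℂ) • A.map Complex.ofReal := by
      ext; simp
    exact hmap ▸ norm_lt_one_of_mem_spectrum_smul (Real.exp_pos (-β)) hβ
  have hneumann := Matrix.hasSum_pow_inv_one_sub <|
    Matrix.summable_pow_of_summable_pow_map_ofReal <|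
      Matrix.summable_pow_of_norm_spectrum_lt_one _ hspec
  have hterm (n : ℕ) (w : V) :
      Real.exp (-β * n) * (A ^ n) w v = ((Real.exp (-β) • A) ^ n) w v := by
    rw [smul_pow, Matrix.smul_apply, smul_eq_mul, ← Real.exp_nat_mul]
    ring_nf
  have hy : HasSum (fun n : ℕ => ∑ w : V, Real.exp (-β * n) * (A ^ n) w v)
      (∑ w : V, (1 - Real.exp (-β) • A)⁻¹ w v) := by
    simp_rw [hterm]
    exact hasSum_sum fun w _ => Pi.hasSum.mp (Pi.hasSum.mp hneumann w) v
  refine ⟨hy, ?_⟩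
  have hA0 : ∀ w u, 0 ≤ A w u := fun w u => hA w u ▸ Nat.cast_nonneg _
  calc (1 : ℝ) = ∑ w : V, Real.exp (-β * (0 : ℕ)) * (A ^ 0) w v := by simp [Matrix.one_apply]
    _ ≤ _ := le_hasSum hy 0 fun n _ => Finset.sum_nonneg fun w _ =>
        mul_nonneg (Real.exp_nonneg _) (Matrix.pow_apply_nonneg hA0 n w v)

/-- Let `E` be a finite directed graph with vertex matrix `A(v,w) = |vE¹w|` (over `ℝ`),
and let `β` satisfy `β > log ρ(A)`, expressed as `exp(-β)|μ| < 1` for every complex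
eigenvalue `μ` of `A`.  Since paths of length `n` from `v` to `w` (with source `v`,
range `w`) are counted by `Aⁿ(w,v)`, the series
`y_v = ∑_{μ ∈ E*v} exp(-β|μ|) = ∑_{n} ∑_w exp(-βn) Aⁿ(w,v)` converges, with sum
`∑_w ((I - exp(-β)A)⁻¹)(w,v)`, and this sum is at least `1`. -/
theorem stmt10 {V E : Type*} [Fintype V] [DecidableEq V] [Fintype E] [DecidableEq E]
    (r s : E → V) (A : Matrix V V ℝ)
    (hA : ∀ v w : V, A v w = (Fintype.card {e : E // r e = v ∧ s e = w} : ℝ))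
    (β : ℝ)
    (hβ : ∀ μ ∈ spectrum ℂ (A.map (Complex.ofReal : ℝ → ℂ)),
      Real.exp (-β) * ‖μ‖ < 1) :
    ∀ v : V,
      HasSum (fun n : ℕ => ∑ w : V, Real.exp (-β * n) * (A ^ n) w v)
        (∑ w : V, (1 - Real.exp (-β) • A)⁻¹ w v) ∧
      1 ≤ ∑ w : V, (1 - Real.exp (-β) • A)⁻¹ w v :=
  stmt10_general r s A hA β hβ
end
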